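/- Fix q, r ≥ 0. The map from (0,∞) × SO(3) to (ℝ³)³ sending (s, O) to (√(s²+q+r)·e₁, √(s²+r)·e₂, −s·e₃), where e₁, e₂, e₃ ∈ ℝ³ are the rows of the matrix O ∈ SO(3), is a homeomorphism onto the set N_{q,r} = {(a₁,a₂,a₃) ∈ (ℝ³)³ : ⟨aᵢ,aⱼ⟩ = 0 for i ≠ j, ‖a₁‖²−‖a₂‖² = q, ‖a₂‖²−‖a₃‖² = r, ⟨a₁, a₂ × a₃⟩ < 0}. In particular N_{q,r} is connected. -/

import Mathlib

open scoped RealInnerProductSpace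
open scoped Matrix
set_option maxHeartbeats 1000000

noncomputable section

/-- `ℝ³` with the standard (Euclidean) inner product. -/
abbrev E3 : Type := EuclideanSpace ℝ (Fin 3)

/-- The cross product on `ℝ³`. -/
def cross (u v : E3) : E3 :=
  (WithLp.equiv 2 (Fin 3 → ℝ)).symm
    (crossProduct ((WithLp.equiv 2 (Fin 3 → ℝ)) u) ((WithLp.equiv 2 (Fin 3 → ℝ)) v))

/-- `Φ(a₁,a₂,a₃) = ⟨a₁, a₂ × a₃⟩`. -/
def Phi (a : E3 × E3 × E3) : ℝ := ⟪a.1, cross a.2.1 a.2.2⟫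

/-- The five Casimir functions collected into a map `(ℝ³)³ → ℝ⁵`. -/
def casimir (a : E3 × E3 × E3) : Fin 5 → ℝ :=
  ![⟪a.1, a.2.1⟫, ⟪a.2.1, a.2.2⟫, ⟪a.2.2, a.1⟫,
    ‖a.1‖ ^ 2 - ‖a.2.1‖ ^ 2, ‖a.2.1‖ ^ 2 - ‖a.2.2‖ ^ 2]

/-- The vector field `V₀(a) = (a₂×a₃, a₃×a₁, a₁×a₂)`. -/
def V0 (a : E3 × E3 × E3) : E3 × E3 × E3 :=
  (cross a.2.1 a.2.2, cross a.2.2 a.1, cross a.1 a.2.1)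

/-- The vector field `V₁(a) = (0, a₂×a₁, a₃×a₁)`. -/
def V1 (a : E3 × E3 × E3) : E3 × E3 × E3 :=
  (0, cross a.2.1 a.1, cross a.2.2 a.1)

/-- The vector field `V₂(a) = (a₁×a₂, 0, a₃×a₂)`. -/
def V2 (a : E3 × E3 × E3) : E3 × E3 × E3 :=
  (cross a.1 a.2.1, 0, cross a.2.2 a.2.1)

/-- The vector field `V₃(a) = (a₁×a₃, a₂×a₃, 0)`. -/
def V3 (a : E3 × E3 × E3) : E3 × E3 × E3 :=
  (cross a.1 a.2.2, cross a.2.1 a.2.2, 0)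


/-- The normal-form leaf `N_{q,r}`. -/
def Nqr (q r : ℝ) : Set (E3 × E3 × E3) :=
  {a | ⟪a.1, a.2.1⟫ = 0 ∧ ⟪a.2.1, a.2.2⟫ = 0 ∧ ⟪a.2.2, a.1⟫ = 0 ∧
    ‖a.1‖ ^ 2 - ‖a.2.1‖ ^ 2 = q ∧ ‖a.2.1‖ ^ 2 - ‖a.2.2‖ ^ 2 = r ∧ Phi a < 0}

/-- The `i`-th row of a matrix, as a vector of `ℝ³`. -/
def row (O : Matrix (Fin 3) (Fin 3) ℝ) (i : Fin 3) : E3 :=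
  (WithLp.equiv 2 (Fin 3 → ℝ)).symm (O i)

lemma inner3 (x y : E3) : ⟪x,y⟫ = x 0 * y 0 + x 1 * y 1 + x 2 * y 2 := by
  simp [PiLp.inner_apply, Fin.sum_univ_three]; ring

lemma normsq3 (x : E3) : ‖x‖^2 = x 0 ^ 2 + x 1 ^ 2 + x 2 ^ 2 := by
  rw [← real_inner_self_eq_norm_sq, inner3]; ring

lemma smul3 (c : ℝ) (x : E3) (i : Fin 3) : (c • x) i = c * x i := rfl

lemma cross_c (u v : E3) :
    (cross u v 0 = u 1 * v 2 - u 2 * v 1) ∧ (cross u v 1 = u 2 * v 0 - u 0 * v 2) ∧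
      (cross u v 2 = u 0 * v 1 - u 1 * v 0) := by
  refine ⟨?_, ?_, ?_⟩ <;> simp [cross, crossProduct]

lemma Phi_eq (x y z : E3) : Phi (x, y, z) =
    x 0 * (y 1 * z 2 - y 2 * z 1) + x 1 * (y 2 * z 0 - y 0 * z 2)
      + x 2 * (y 0 * z 1 - y 1 * z 0) := by
  rw [Phi, inner3, (cross_c y z).1, (cross_c y z).2.1, (cross_c y z).2.2]

lemma Phi_smul (c d e : ℝ) (x y z : E3) :
    Phi (c • x, d • y, e • z) = c * d * e * Phi (x, y, z) := by
  rw [Phi_eq, Phi_eq]; simp only [smul3]; ring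

lemma row_apply (M : Matrix (Fin 3) (Fin 3) ℝ) (i j : Fin 3) : row M i j = M i j := rfl

lemma Phi_rows (M : Matrix (Fin 3) (Fin 3) ℝ) :
    Phi (row M 0, row M 1, row M 2) = M.det := by
  rw [Phi_eq, Matrix.det_fin_three]; simp only [row_apply]; ring

lemma mul_transpose_apply (M : Matrix (Fin 3) (Fin 3) ℝ) (i j : Fin 3) :
    (M * Mᵀ) i j = ⟪row M i, row M j⟫ := by
  rw [inner3, Matrix.mul_apply, Fin.sum_univ_three]
  simp [row_apply, Matrix.transpose_apply]

lemma inner_smul_smul (c d : ℝ) (x y : E3) : ⟪c • x, d • y⟫ = c * d * ⟪x, y⟫ := by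
  rw [inner3, inner3]; simp only [smul3]; ring

lemma so3_facts {A : Matrix (Fin 3) (Fin 3) ℝ} (h : A ∈ Matrix.specialOrthogonalGroup (Fin 3) ℝ) :
    A * Aᵀ = 1 ∧ Aᵀ * A = 1 ∧ A.det = 1 := by
  rw [Matrix.mem_specialOrthogonalGroup_iff] at h
  obtain ⟨h1, h2⟩ := h
  have h3 := (Matrix.mem_orthogonalGroup_iff _ _).mp h1
  have h4 := (Matrix.mem_orthogonalGroup_iff' _ _).mp h1
  exact ⟨h3, h4, h2⟩

lemma inner_row_so3 {A : Matrix (Fin 3) (Fin 3) ℝ} (h : A * Aᵀ = 1) (i j : Fin 3) :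
    ⟪row A i, row A j⟫ = if i = j then 1 else 0 := by
  rw [← mul_transpose_apply, h, Matrix.one_apply]

def fwd (q r s : ℝ) (O : Matrix (Fin 3) (Fin 3) ℝ) : E3 × E3 × E3 :=
  (Real.sqrt (s ^ 2 + q + r) • row O 0, Real.sqrt (s ^ 2 + r) • row O 1, (-s) • row O 2)

lemma norm_smul_sq (c : ℝ) (x : E3) : ‖c • x‖ ^ 2 = c ^ 2 * ‖x‖ ^ 2 := by
  rw [norm_smul]; simp [mul_pow, sq_abs]

lemma fwd_mem (q r : ℝ) (hq : 0 ≤ q) (hr : 0 ≤ r) (s : ℝ) (hs : 0 < s)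
    (O : Matrix (Fin 3) (Fin 3) ℝ) (hO : O ∈ Matrix.specialOrthogonalGroup (Fin 3) ℝ) :
    fwd q r s O ∈ Nqr q r := by
  obtain ⟨h1, _h2, hdet⟩ := so3_facts hO
  have hrow := inner_row_so3 h1
  have hsq : (0:ℝ) < s ^ 2 := by positivity
  have hc1 : Real.sqrt (s ^ 2 + q + r) ^ 2 = s ^ 2 + q + r := Real.sq_sqrt (by linarith)
  have hc2 : Real.sqrt (s ^ 2 + r) ^ 2 = s ^ 2 + r := Real.sq_sqrt (by linarith)
  have hc1p : 0 < Real.sqrt (s ^ 2 + q + r) := Real.sqrt_pos.mpr (by linarith)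
  have hc2p : 0 < Real.sqrt (s ^ 2 + r) := Real.sqrt_pos.mpr (by linarith)
  have hn : ∀ i, ‖row O i‖ ^ 2 = 1 := by
    intro i
    rw [← real_inner_self_eq_norm_sq]
    simpa using hrow i i
  refine ⟨?_, ?_, ?_, ?_, ?_, ?_⟩
  · show ⟪Real.sqrt (s ^ 2 + q + r) • row O 0, Real.sqrt (s ^ 2 + r) • row O 1⟫ = (0:ℝ)
    have h := hrow 0 1
    rw [if_neg (by decide)] at h
    rw [inner_smul_smul, h, mul_zero]
  · show ⟪Real.sqrt (s ^ 2 + r) • row O 1, (-s) • row O 2⟫ = (0:ℝ)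
    have h := hrow 1 2
    rw [if_neg (by decide)] at h
    rw [inner_smul_smul, h, mul_zero]
  · show ⟪(-s) • row O 2, Real.sqrt (s ^ 2 + q + r) • row O 0⟫ = (0:ℝ)
    have h := hrow 2 0
    rw [if_neg (by decide)] at h
    rw [inner_smul_smul, h, mul_zero]
  · show ‖Real.sqrt (s ^ 2 + q + r) • row O 0‖ ^ 2 - ‖Real.sqrt (s ^ 2 + r) • row O 1‖ ^ 2 = q
    rw [norm_smul_sq, norm_smul_sq, hn 0, hn 1, hc1, hc2]; ring
  · show ‖Real.sqrt (s ^ 2 + r) • row O 1‖ ^ 2 - ‖(-s) • row O 2‖ ^ 2 = r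
    rw [norm_smul_sq, norm_smul_sq, hn 1, hn 2, hc2]; ring
  · show Phi (fwd q r s O) < 0
    rw [show Phi (fwd q r s O) = Phi (Real.sqrt (s ^ 2 + q + r) • row O 0,
        Real.sqrt (s ^ 2 + r) • row O 1, (-s) • row O 2) from rfl, Phi_smul, Phi_rows, hdet]
    have : 0 < Real.sqrt (s ^ 2 + q + r) * Real.sqrt (s ^ 2 + r) * s := by positivity
    nlinarith

def bwdM (a : E3 × E3 × E3) : Matrix (Fin 3) (Fin 3) ℝ :=
  Matrix.of ![fun j => ‖a.1‖⁻¹ * a.1 j, fun j => ‖a.2.1‖⁻¹ * a.2.1 j,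
    fun j => -(‖a.2.2‖⁻¹ * a.2.2 j)]

lemma row_bwdM (a : E3 × E3 × E3) :
    row (bwdM a) 0 = ‖a.1‖⁻¹ • a.1 ∧ row (bwdM a) 1 = ‖a.2.1‖⁻¹ • a.2.1 ∧
      row (bwdM a) 2 = (-‖a.2.2‖⁻¹) • a.2.2 := by
  refine ⟨?_, ?_, ?_⟩ <;> · ext j; simp [row_apply, bwdM, smul3]; try ring

lemma Nqr_facts {q r : ℝ} (hq : 0 ≤ q) (hr : 0 ≤ r) {a : E3 × E3 × E3} (ha : a ∈ Nqr q r) :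
    0 < ‖a.2.2‖ ∧ 0 < ‖a.2.1‖ ∧ 0 < ‖a.1‖ := by
  obtain ⟨e1, e2, e3, e4, e5, e6⟩ := ha
  have h3 : a.2.2 ≠ 0 := by
    intro h
    rw [show Phi a = Phi (a.1, a.2.1, a.2.2) from rfl, Phi_eq, h] at e6
    simp at e6
  have h3' : 0 < ‖a.2.2‖ := norm_pos_iff.mpr h3
  have h2' : 0 < ‖a.2.1‖ := by
    have : 0 < ‖a.2.1‖ ^ 2 := by nlinarith
    nlinarith [norm_nonneg a.2.1]
  have h1' : 0 < ‖a.1‖ := by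
    have : 0 < ‖a.1‖ ^ 2 := by nlinarith
    nlinarith [norm_nonneg a.1]
  exact ⟨h3', h2', h1'⟩

lemma bwdM_mem {q r : ℝ} (hq : 0 ≤ q) (hr : 0 ≤ r) {a : E3 × E3 × E3} (ha : a ∈ Nqr q r) :
    bwdM a ∈ Matrix.specialOrthogonalGroup (Fin 3) ℝ := by
  obtain ⟨h3, h2, h1⟩ := Nqr_facts hq hr ha
  obtain ⟨e1, e2, e3, e4, e5, e6⟩ := ha
  obtain ⟨r0, r1, r2⟩ := row_bwdM a
  have n1 : ⟪a.1, a.1⟫ = ‖a.1‖ ^ 2 := real_inner_self_eq_norm_sq _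
  have n2 : ⟪a.2.1, a.2.1⟫ = ‖a.2.1‖ ^ 2 := real_inner_self_eq_norm_sq _
  have n3 : ⟪a.2.2, a.2.2⟫ = ‖a.2.2‖ ^ 2 := real_inner_self_eq_norm_sq _
  have e1' : ⟪a.2.1, a.1⟫ = 0 := by rw [real_inner_comm]; exact e1
  have e2' : ⟪a.2.2, a.2.1⟫ = 0 := by rw [real_inner_comm]; exact e2
  have e3' : ⟪a.1, a.2.2⟫ = 0 := by rw [real_inner_comm]; exact e3
  have h00 : ⟪row (bwdM a) 0, row (bwdM a) 0⟫ = (1:ℝ) := by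
    rw [r0, inner_smul_smul, n1]; field_simp [ne_of_gt h1]
  have h11 : ⟪row (bwdM a) 1, row (bwdM a) 1⟫ = (1:ℝ) := by
    rw [r1, inner_smul_smul, n2]; field_simp [ne_of_gt h2]
  have h22 : ⟪row (bwdM a) 2, row (bwdM a) 2⟫ = (1:ℝ) := by
    rw [r2, inner_smul_smul, n3]; field_simp [ne_of_gt h3]
  have h01 : ⟪row (bwdM a) 0, row (bwdM a) 1⟫ = (0:ℝ) := by
    rw [r0, r1, inner_smul_smul, e1]; ring
  have h10 : ⟪row (bwdM a) 1, row (bwdM a) 0⟫ = (0:ℝ) := by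
    rw [r0, r1, inner_smul_smul, e1']; ring
  have h12 : ⟪row (bwdM a) 1, row (bwdM a) 2⟫ = (0:ℝ) := by
    rw [r1, r2, inner_smul_smul, e2]; ring
  have h21 : ⟪row (bwdM a) 2, row (bwdM a) 1⟫ = (0:ℝ) := by
    rw [r1, r2, inner_smul_smul, e2']; ring
  have h20 : ⟪row (bwdM a) 2, row (bwdM a) 0⟫ = (0:ℝ) := by
    rw [r0, r2, inner_smul_smul, e3]; ring
  have h02 : ⟪row (bwdM a) 0, row (bwdM a) 2⟫ = (0:ℝ) := by
    rw [r0, r2, inner_smul_smul, e3']; ring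
  have horth : bwdM a * (bwdM a)ᵀ = 1 := by
    ext i j
    rw [mul_transpose_apply, Matrix.one_apply]
    fin_cases i <;> fin_cases j
    · rw [if_pos rfl]; exact h00
    · rw [if_neg (by decide)]; exact h01
    · rw [if_neg (by decide)]; exact h02
    · rw [if_neg (by decide)]; exact h10
    · rw [if_pos rfl]; exact h11
    · rw [if_neg (by decide)]; exact h12
    · rw [if_neg (by decide)]; exact h20
    · rw [if_neg (by decide)]; exact h21
    · rw [if_pos rfl]; exact h22
  have hdet : (bwdM a).det = 1 := by
    have hd : (bwdM a).det = ‖a.1‖⁻¹ * ‖a.2.1‖⁻¹ * (-‖a.2.2‖⁻¹) * Phi a := by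
      rw [← Phi_rows, r0, r1, r2, Phi_smul]
    have hsq : (bwdM a).det * (bwdM a).det = 1 := by
      have := congrArg Matrix.det horth
      rwa [Matrix.det_mul, Matrix.det_transpose, Matrix.det_one] at this
    have hpos : 0 < (bwdM a).det := by
      rw [hd]
      have hp : 0 < ‖a.1‖⁻¹ * ‖a.2.1‖⁻¹ * ‖a.2.2‖⁻¹ := by positivity
      nlinarith [hp, e6]
    rcases mul_self_eq_one_iff.mp hsq with h | h
    · exact h
    · rw [h] at hpos; linarith
  rw [Matrix.mem_specialOrthogonalGroup_iff]
  refine ⟨?_, hdet⟩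
  rw [Matrix.mem_orthogonalGroup_iff]
  simpa only [Matrix.star_eq_conjTranspose, Matrix.conjTranspose_eq_transpose_of_trivial]
    using horth

def S3v (u : Fin 3 → ℝ) : ℝ := u 0 ^ 2 + u 1 ^ 2 + u 2 ^ 2

def dot3 (u v : Fin 3 → ℝ) : ℝ := u 0 * v 0 + u 1 * v 1 + u 2 * v 2

lemma dot3_comm (u v : Fin 3 → ℝ) : dot3 u v = dot3 v u := by simp only [dot3]; ring

lemma dot3_sub_left (a b c : Fin 3 → ℝ) : dot3 (a - b) c = dot3 a c - dot3 b c := by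
  simp only [dot3, Pi.sub_apply]; ring

lemma dot3_sub_right (a b c : Fin 3 → ℝ) : dot3 a (b - c) = dot3 a b - dot3 a c := by
  simp only [dot3, Pi.sub_apply]; ring

lemma dot3_neg_right (a b : Fin 3 → ℝ) : dot3 a (-b) = -dot3 a b := by
  simp only [dot3, Pi.neg_apply]; ring

lemma S3v_eq_dot3 (a : Fin 3 → ℝ) : S3v a = dot3 a a := by simp only [dot3, S3v]; ring

def refl3 (u : Fin 3 → ℝ) : Matrix (Fin 3) (Fin 3) ℝ :=
  Matrix.of fun i j => (if i = j then (1:ℝ) else 0) - 2 * u i * u j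

lemma refl3_transpose (u : Fin 3 → ℝ) : (refl3 u)ᵀ = refl3 u := by
  ext i j
  show (if j = i then (1:ℝ) else 0) - 2 * u j * u i = (if i = j then (1:ℝ) else 0) - 2 * u i * u j
  by_cases h : i = j
  · subst h; ring
  · rw [if_neg h, if_neg (Ne.symm h)]; ring

lemma refl3_mulVec (u x : Fin 3 → ℝ) (i : Fin 3) :
    (refl3 u *ᵥ x) i = x i - 2 * dot3 u x * u i := by
  fin_cases i <;>
    simp [refl3, Matrix.mulVec, dotProduct, Fin.sum_univ_three, dot3] <;> ring

lemma refl3_mul_self {u : Fin 3 → ℝ} (hu : S3v u = 1) : refl3 u * refl3 u = 1 := by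
  have hu' : u 0 ^ 2 + u 1 ^ 2 + u 2 ^ 2 = 1 := hu
  ext i j
  rw [Matrix.mul_apply, Fin.sum_univ_three, Matrix.one_apply]
  simp only [refl3, Matrix.of_apply]
  fin_cases i <;> fin_cases j <;>
    simp only [show (⟨2, by omega⟩ : Fin 3) = 2 from rfl, Fin.zero_eta, Fin.mk_one] <;>
    norm_num [Fin.ext_iff]
  · linear_combination (4 * u 0 * u 0) * hu'
  · linear_combination (4 * u 0 * u 1) * hu'
  · linear_combination (4 * u 0 * u 2) * hu'
  · linear_combination (4 * u 1 * u 0) * hu'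
  · linear_combination (4 * u 1 * u 1) * hu'
  · linear_combination (4 * u 1 * u 2) * hu'
  · linear_combination (4 * u 2 * u 0) * hu'
  · linear_combination (4 * u 2 * u 1) * hu'
  · linear_combination (4 * u 2 * u 2) * hu'

lemma refl3_det {u : Fin 3 → ℝ} (hu : S3v u = 1) : (refl3 u).det = -1 := by
  have hu' : u 0 ^ 2 + u 1 ^ 2 + u 2 ^ 2 = 1 := hu
  rw [Matrix.det_fin_three]
  simp only [refl3, Matrix.of_apply]
  norm_num [Fin.ext_iff]
  linear_combination (-2 : ℝ) * hu'

lemma dot3_mulVec {A : Matrix (Fin 3) (Fin 3) ℝ} (h : Aᵀ * A = 1) (x y : Fin 3 → ℝ) :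
    dot3 (A *ᵥ x) (A *ᵥ y) = dot3 x y := by
  have e : ∀ k l : Fin 3, A 0 k * A 0 l + A 1 k * A 1 l + A 2 k * A 2 l
      = if k = l then (1:ℝ) else 0 := by
    intro k l
    have := congrFun (congrFun h k) l
    rw [Matrix.mul_apply, Fin.sum_univ_three, Matrix.one_apply] at this
    simpa [Matrix.transpose_apply] using this
  have e00 : A 0 0 * A 0 0 + A 1 0 * A 1 0 + A 2 0 * A 2 0 = 1 := by
    have := e 0 0; rwa [if_pos rfl] at this
  have e11 : A 0 1 * A 0 1 + A 1 1 * A 1 1 + A 2 1 * A 2 1 = 1 := by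
    have := e 1 1; rwa [if_pos rfl] at this
  have e22 : A 0 2 * A 0 2 + A 1 2 * A 1 2 + A 2 2 * A 2 2 = 1 := by
    have := e 2 2; rwa [if_pos rfl] at this
  have e01 : A 0 0 * A 0 1 + A 1 0 * A 1 1 + A 2 0 * A 2 1 = 0 := by
    have := e 0 1; rwa [if_neg (by decide)] at this
  have e02 : A 0 0 * A 0 2 + A 1 0 * A 1 2 + A 2 0 * A 2 2 = 0 := by
    have := e 0 2; rwa [if_neg (by decide)] at this
  have e10 : A 0 1 * A 0 0 + A 1 1 * A 1 0 + A 2 1 * A 2 0 = 0 := by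
    have := e 1 0; rwa [if_neg (by decide)] at this
  have e12 : A 0 1 * A 0 2 + A 1 1 * A 1 2 + A 2 1 * A 2 2 = 0 := by
    have := e 1 2; rwa [if_neg (by decide)] at this
  have e20 : A 0 2 * A 0 0 + A 1 2 * A 1 0 + A 2 2 * A 2 0 = 0 := by
    have := e 2 0; rwa [if_neg (by decide)] at this
  have e21 : A 0 2 * A 0 1 + A 1 2 * A 1 1 + A 2 2 * A 2 1 = 0 := by
    have := e 2 1; rwa [if_neg (by decide)] at this
  simp only [dot3, Matrix.mulVec, dotProduct, Fin.sum_univ_three]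
  linear_combination (x 0 * y 0) * e00 + (x 0 * y 1) * e01 + (x 0 * y 2) * e02 +
    (x 1 * y 0) * e10 + (x 1 * y 1) * e11 + (x 1 * y 2) * e12 +
    (x 2 * y 0) * e20 + (x 2 * y 1) * e21 + (x 2 * y 2) * e22

lemma transpose_mulVec_cross (M : Matrix (Fin 3) (Fin 3) ℝ) (x y : Fin 3 → ℝ) :
    Mᵀ *ᵥ (crossProduct (M *ᵥ x) (M *ᵥ y)) = M.det • crossProduct x y := by
  funext i
  fin_cases i <;>
    simp [cross_apply, Matrix.mulVec, dotProduct, Fin.sum_univ_three,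
      Matrix.det_fin_three, Matrix.transpose_apply, Pi.smul_apply, smul_eq_mul] <;> ring

lemma mul_colmat (M : Matrix (Fin 3) (Fin 3) ℝ) (x y z : Fin 3 → ℝ) :
    M * (Matrix.of ![x, y, z])ᵀ = (Matrix.of ![M *ᵥ x, M *ᵥ y, M *ᵥ z])ᵀ := by
  ext i j
  fin_cases j <;>
    simp [Matrix.mul_apply, Matrix.mulVec, dotProduct, Fin.sum_univ_three,
      Matrix.transpose_apply, Matrix.vecHead, Matrix.vecTail]

lemma S3v_pos {x : Fin 3 → ℝ} (hx : x ≠ 0) : 0 < S3v x := by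
  rcases Function.ne_iff.mp hx with ⟨i, hi⟩
  rw [Pi.zero_apply] at hi
  have h2 : 0 < x i ^ 2 := lt_of_le_of_ne (sq_nonneg _) (Ne.symm (pow_ne_zero 2 hi))
  have h0 := sq_nonneg (x 0); have h1 := sq_nonneg (x 1); have h22 := sq_nonneg (x 2)
  show 0 < x 0 ^ 2 + x 1 ^ 2 + x 2 ^ 2
  fin_cases i <;> simp at h2 <;> nlinarith

lemma S3v_smul (c : ℝ) (x : Fin 3 → ℝ) : S3v (c • x) = c ^ 2 * S3v x := by
  show (c * x 0) ^ 2 + (c * x 1) ^ 2 + (c * x 2) ^ 2 = _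
  simp only [S3v]; ring

lemma S3v_nsmul {x : Fin 3 → ℝ} (hx : x ≠ 0) :
    S3v ((Real.sqrt (S3v x))⁻¹ • x) = 1 := by
  have h := S3v_pos hx
  rw [S3v_smul, inv_pow, Real.sq_sqrt h.le, inv_mul_cancel₀ (ne_of_gt h)]

def toE3 (u : Fin 3 → ℝ) : E3 := (WithLp.equiv 2 (Fin 3 → ℝ)).symm u

lemma toE3_mem_sphere {u : Fin 3 → ℝ} (hu : S3v u = 1) :
    toE3 u ∈ Metric.sphere (0 : E3) 1 := by
  rw [mem_sphere_zero_iff_norm]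
  have h : ‖toE3 u‖ ^ 2 = 1 := by
    rw [normsq3]; exact hu
  have h2 := Real.sqrt_sq (norm_nonneg (toE3 u))
  rw [h, Real.sqrt_one] at h2
  exact h2.symm

lemma refl3_pair_mem {u v : Fin 3 → ℝ} (hu : S3v u = 1) (hv : S3v v = 1) :
    refl3 u * refl3 v ∈ Matrix.specialOrthogonalGroup (Fin 3) ℝ := by
  rw [Matrix.mem_specialOrthogonalGroup_iff]
  constructor
  · rw [Matrix.mem_orthogonalGroup_iff]
    rw [Matrix.transpose_mul, refl3_transpose, refl3_transpose,
      Matrix.mul_assoc (refl3 u) (refl3 v), ← Matrix.mul_assoc (refl3 v) (refl3 v),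
      refl3_mul_self hv, Matrix.one_mul, refl3_mul_self hu]
  · rw [Matrix.det_mul, refl3_det hu, refl3_det hv]; norm_num

lemma connSO3' : ConnectedSpace ↥(Matrix.specialOrthogonalGroup (Fin 3) ℝ) := by
  have hrank : 1 < Module.rank ℝ E3 := by
    have h1 : Module.finrank ℝ E3 = 3 := finrank_euclideanSpace_fin
    have h2 : (Module.finrank ℝ E3 : Cardinal) = Module.rank ℝ E3 := Module.finrank_eq_rank ℝ E3
    rw [h1] at h2
    rw [← h2]
    exact_mod_cast (by norm_num : (1:ℕ) < 3)
  haveI : ConnectedSpace ↥(Metric.sphere (0 : E3) 1) :=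
    Subtype.connectedSpace (isConnected_sphere hrank 0 zero_le_one)
  have sph_fact : ∀ z : ↥(Metric.sphere (0 : E3) 1), S3v (fun i => (↑z : E3) i) = 1 := by
    rintro ⟨z, hz⟩
    rw [mem_sphere_zero_iff_norm] at hz
    have : ‖z‖ ^ 2 = 1 := by rw [hz]; norm_num
    rw [normsq3] at this
    exact this
  let ψ : ↥(Metric.sphere (0 : E3) 1) × ↥(Metric.sphere (0 : E3) 1) →
      ↥(Matrix.specialOrthogonalGroup (Fin 3) ℝ) := fun p =>
    ⟨refl3 (fun i => (↑p.1 : E3) i) * refl3 (fun i => (↑p.2 : E3) i),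
      refl3_pair_mem (sph_fact p.1) (sph_fact p.2)⟩
  have hcont : Continuous ψ := by
    apply Continuous.subtype_mk
    have hc : ∀ (f : ↥(Metric.sphere (0 : E3) 1) × ↥(Metric.sphere (0 : E3) 1) →
        ↥(Metric.sphere (0 : E3) 1)), Continuous f →
        Continuous fun p => refl3 (fun i => (↑(f p) : E3) i) := by
      intro f hf
      apply continuous_matrix
      intro i j
      show Continuous fun p => (if i = j then (1:ℝ) else 0) - 2 * (↑(f p) : E3) i * (↑(f p) : E3) j
      have hcoord : ∀ k : Fin 3, Continuous fun p => (↑(f p) : E3) k := by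
        intro k
        exact ((continuous_apply k).comp (PiLp.continuous_ofLp 2 (fun _ : Fin 3 => ℝ))).comp
          (continuous_subtype_val.comp hf)
      exact continuous_const.sub ((continuous_const.mul (hcoord i)).mul (hcoord j))
    exact (hc Prod.fst continuous_fst).matrix_mul (hc Prod.snd continuous_snd)
  have hsurj : Function.Surjective ψ := by
    rintro ⟨A, hA⟩
    obtain ⟨hA1, hA2, hdet⟩ := so3_facts hA
    by_cases hone : A = 1
    · have he0 : S3v ![1, 0, 0] = 1 := by show (1:ℝ) ^ 2 + 0 ^ 2 + 0 ^ 2 = 1; norm_num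
      refine ⟨(⟨toE3 ![1, 0, 0], toE3_mem_sphere he0⟩, ⟨toE3 ![1, 0, 0], toE3_mem_sphere he0⟩), ?_⟩
      apply Subtype.ext
      show refl3 _ * refl3 _ = A
      rw [hone]
      exact refl3_mul_self he0
    · -- find x not fixed by A
      have hex : ∃ x, A *ᵥ x ≠ x := by
        by_contra hall
        push_neg at hall
        apply hone
        ext i j
        have h := congrFun (hall (Pi.single j 1)) i
        rw [Matrix.mulVec_single] at h
        simp only [Pi.smul_apply, MulOpposite.op_one, one_smul, Matrix.col_apply] at h
        rw [h, Matrix.one_apply, Pi.single_apply]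
      obtain ⟨x, hx⟩ := hex
      have hx0 : x ≠ 0 := by
        intro h
        apply hx
        rw [h, Matrix.mulVec_zero]
      -- the first reflection vector
      set u' : Fin 3 → ℝ := A *ᵥ x - x with hu'def
      have hu'0 : u' ≠ 0 := sub_ne_zero.mpr hx
      set c : ℝ := (Real.sqrt (S3v u'))⁻¹ with hcdef
      set u : Fin 3 → ℝ := c • u' with hudef
      have hSu : S3v u = 1 := S3v_nsmul hu'0
      have hc2 : c ^ 2 = (S3v u')⁻¹ := by
        rw [hcdef, inv_pow, Real.sq_sqrt (S3v_pos hu'0).le]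
      -- B := refl3 u * A
      set B : Matrix (Fin 3) (Fin 3) ℝ := refl3 u * A with hBdef
      have hB1 : B * Bᵀ = 1 := by
        rw [hBdef, Matrix.transpose_mul, refl3_transpose,
          Matrix.mul_assoc (refl3 u) A, ← Matrix.mul_assoc A Aᵀ, hA1, Matrix.one_mul,
          refl3_mul_self hSu]
      have hB2 : Bᵀ * B = 1 := by
        rw [hBdef, Matrix.transpose_mul, refl3_transpose,
          Matrix.mul_assoc Aᵀ (refl3 u), ← Matrix.mul_assoc (refl3 u) (refl3 u),
          refl3_mul_self hSu, Matrix.one_mul, hA2]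
      have hdB : B.det = -1 := by
        rw [hBdef, Matrix.det_mul, refl3_det hSu, hdet]; ring
      -- B fixes x
      have hdotAx : dot3 (A *ᵥ x) (A *ᵥ x) = dot3 x x := dot3_mulVec hA2 x x
      have hdd : 2 * dot3 u' (A *ᵥ x) = S3v u' := by
        rw [hu'def, S3v_eq_dot3]
        simp only [dot3_sub_left, dot3_sub_right]
        have hcm := dot3_comm x (A *ᵥ x)
        linarith [hdotAx, hcm]
      have hBx : B *ᵥ x = x := by
        funext i
        rw [hBdef, ← Matrix.mulVec_mulVec, refl3_mulVec]
        have hdu : dot3 u (A *ᵥ x) = c * dot3 u' (A *ᵥ x) := by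
          simp only [hudef, dot3, Pi.smul_apply, smul_eq_mul]; ring
        have hui : u i = c * u' i := rfl
        rw [hdu, hui]
        have hc2' : c * c = (S3v u')⁻¹ := by rw [← sq]; exact hc2
        have hSne : S3v u' ≠ 0 := ne_of_gt (S3v_pos hu'0)
        have : 2 * (c * dot3 u' (A *ᵥ x)) * (c * u' i) = u' i := by
          have : 2 * (c * dot3 u' (A *ᵥ x)) * (c * u' i)
              = (c * c) * (2 * dot3 u' (A *ᵥ x)) * u' i := by ring
          rw [this, hdd, hc2', inv_mul_cancel₀ hSne, one_mul]
        rw [this]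
        simp [hu'def]
      -- eigenvector with eigenvalue -1
      have hdet1B : (1 + B).det = 0 := by
        have key : B * (1 + Bᵀ) = B + 1 := by
          rw [Matrix.mul_add, Matrix.mul_one, hB1]
        have h1 : B.det * (1 + Bᵀ).det = (B + 1).det := by
          rw [← Matrix.det_mul, key]
        have h2 : (1 + Bᵀ).det = (1 + B).det := by
          rw [show (1 : Matrix (Fin 3) (Fin 3) ℝ) + Bᵀ = (1 + B)ᵀ by
            rw [Matrix.transpose_add, Matrix.transpose_one], Matrix.det_transpose]
        have h3 : (B + 1) = (1 + B) := by rw [add_comm]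
        rw [h2, h3, hdB] at h1
        linarith
      obtain ⟨v', hv'0, hv'⟩ := Matrix.exists_mulVec_eq_zero_iff.mpr hdet1B
      have hBv' : B *ᵥ v' = -v' := by
        rw [Matrix.add_mulVec, Matrix.one_mulVec] at hv'
        rw [add_comm] at hv'
        exact eq_neg_of_add_eq_zero_left hv'
      set d : ℝ := (Real.sqrt (S3v v'))⁻¹ with hddef
      set v : Fin 3 → ℝ := d • v' with hvdef
      have hSv : S3v v = 1 := S3v_nsmul hv'0
      have hBv : B *ᵥ v = -v := by
        rw [hvdef, Matrix.mulVec_smul, hBv', smul_neg]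
      have hxv : dot3 x v = 0 := by
        have h := dot3_mulVec hB2 x v
        rw [hBx, hBv, dot3_neg_right] at h
        linarith
      set w : Fin 3 → ℝ := crossProduct x v with hwdef
      have hBtw : Bᵀ *ᵥ w = w := by
        have h := transpose_mulVec_cross B x v
        rw [hBx, hBv, hdB] at h
        have hcr : crossProduct x (-v) = -crossProduct x v := by
          funext i; fin_cases i <;> simp [cross_apply] <;> ring
        rw [hcr, Matrix.mulVec_neg, ← hwdef] at h
        have h2 : -(Bᵀ *ᵥ w) = -w := by
          rw [h]; funext i; simp [hwdef]
        have := congrArg Neg.neg h2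
        simpa using this
      have hBw : B *ᵥ w = w := by
        conv_lhs => rw [← hBtw]
        rw [Matrix.mulVec_mulVec, hB1, Matrix.one_mulVec]
      have hRx : refl3 v *ᵥ x = x := by
        funext i; rw [refl3_mulVec]
        rw [dot3_comm v x, hxv]; ring
      have hRv : refl3 v *ᵥ v = -v := by
        funext i; rw [refl3_mulVec]
        rw [← S3v_eq_dot3, hSv]
        show v i - 2 * 1 * v i = -v i
        ring
      have hRw : refl3 v *ᵥ w = w := by
        funext i; rw [refl3_mulVec]
        have hvw : dot3 v w = 0 := by
          simp only [hwdef, dot3, cross_apply]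
          simp
          ring
        rw [hvw]; ring
      set P : Matrix (Fin 3) (Fin 3) ℝ := (Matrix.of ![x, v, w])ᵀ with hPdef
      have hBP : B * P = refl3 v * P := by
        rw [hPdef, mul_colmat, mul_colmat, hBx, hBv, hBw, hRx, hRv, hRw]
      have hdetP : P.det ≠ 0 := by
        rw [hPdef, Matrix.det_transpose]
        have hd : (Matrix.of ![x, v, w]).det = S3v x * S3v v - (dot3 x v) ^ 2 := by
          rw [Matrix.det_fin_three]
          simp only [hwdef, cross_apply, S3v, dot3, Matrix.of_apply, Matrix.cons_val',
            Matrix.cons_val_zero, Matrix.cons_val_one, Matrix.head_cons, Matrix.empty_val',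
            Matrix.cons_val_fin_one, Matrix.head_fin_const, Matrix.cons_val_two, Matrix.tail_cons]
          ring
        rw [hd, hSv, hxv]
        have := ne_of_gt (S3v_pos hx0)
        intro hcon
        apply this
        nlinarith [hcon]
      have hBR : B = refl3 v := by
        have hP : IsUnit P.det := isUnit_iff_ne_zero.mpr hdetP
        calc B = B * P * P⁻¹ := (Matrix.mul_nonsing_inv_cancel_right (A := P) B hP).symm
        _ = refl3 v * P * P⁻¹ := by rw [hBP]
        _ = refl3 v := Matrix.mul_nonsing_inv_cancel_right (A := P) _ hP
      refine ⟨(⟨toE3 u, toE3_mem_sphere hSu⟩, ⟨toE3 v, toE3_mem_sphere hSv⟩), ?_⟩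
      apply Subtype.ext
      show refl3 (fun i => toE3 u i) * refl3 (fun i => toE3 v i) = A
      have hu_eq : (fun i => toE3 u i) = u := rfl
      have hv_eq : (fun i => toE3 v i) = v := rfl
      rw [hu_eq, hv_eq, ← hBR, hBdef, ← Matrix.mul_assoc, refl3_mul_self hSu, Matrix.one_mul]
  exact hsurj.connectedSpace hcont

lemma norm_row_eq_one {O : Matrix (Fin 3) (Fin 3) ℝ}
    (hO : O ∈ Matrix.specialOrthogonalGroup (Fin 3) ℝ) (i : Fin 3) : ‖row O i‖ = 1 := by
  have h := inner_row_so3 (so3_facts hO).1 i i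
  rw [if_pos rfl, real_inner_self_eq_norm_sq] at h
  have h2 := Real.sqrt_sq (norm_nonneg (row O i))
  rw [h, Real.sqrt_one] at h2
  exact h2.symm

lemma connSO3 : ConnectedSpace ↥(Matrix.specialOrthogonalGroup (Fin 3) ℝ) := connSO3'



/-- `(s, O) ↦ (√(s²+q+r)·e₁, √(s²+r)·e₂, −s·e₃)` is a homeomorphism from
`(0,∞) × SO(3)` onto `N_{q,r}`; in particular `N_{q,r}` is connected. -/
theorem Nqr_homeomorph_Ioi_prod_SO3 (q r : ℝ) (hq : 0 ≤ q) (hr : 0 ≤ r) :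
    (∃ H : (Set.Ioi (0 : ℝ)) × (Matrix.specialOrthogonalGroup (Fin 3) ℝ) ≃ₜ Nqr q r,
      ∀ (s : Set.Ioi (0 : ℝ)) (O : Matrix.specialOrthogonalGroup (Fin 3) ℝ),
        (H (s, O) : E3 × E3 × E3) =
          (Real.sqrt ((s : ℝ) ^ 2 + q + r) • row (O : Matrix (Fin 3) (Fin 3) ℝ) 0,
           Real.sqrt ((s : ℝ) ^ 2 + r) • row (O : Matrix (Fin 3) (Fin 3) ℝ) 1,
           (-(s : ℝ)) • row (O : Matrix (Fin 3) (Fin 3) ℝ) 2)) ∧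
    IsConnected (Nqr q r) := by
  classical
  let F : (Set.Ioi (0 : ℝ)) × (Matrix.specialOrthogonalGroup (Fin 3) ℝ) → ↥(Nqr q r) :=
    fun p => ⟨fwd q r ↑p.1 ↑p.2, fwd_mem q r hq hr _ p.1.2 _ p.2.2⟩
  let G : ↥(Nqr q r) → (Set.Ioi (0 : ℝ)) × (Matrix.specialOrthogonalGroup (Fin 3) ℝ) :=
    fun x => (⟨‖(↑x : E3 × E3 × E3).2.2‖, (Nqr_facts hq hr x.2).1⟩,
      ⟨bwdM ↑x, bwdM_mem hq hr x.2⟩)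
  have hleft : ∀ p, G (F p) = p := by
    rintro ⟨⟨s, hs⟩, ⟨O, hO⟩⟩
    have hs' : (0:ℝ) < s := hs
    have hsq : (0:ℝ) < s ^ 2 := by positivity
    have hc1p : 0 < Real.sqrt (s ^ 2 + q + r) := Real.sqrt_pos.mpr (by linarith)
    have hc2p : 0 < Real.sqrt (s ^ 2 + r) := Real.sqrt_pos.mpr (by linarith)
    have hn1 : ‖Real.sqrt (s ^ 2 + q + r) • row O 0‖ = Real.sqrt (s ^ 2 + q + r) := by
      rw [norm_smul, norm_row_eq_one hO, mul_one, Real.norm_eq_abs, abs_of_pos hc1p]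
    have hn2 : ‖Real.sqrt (s ^ 2 + r) • row O 1‖ = Real.sqrt (s ^ 2 + r) := by
      rw [norm_smul, norm_row_eq_one hO, mul_one, Real.norm_eq_abs, abs_of_pos hc2p]
    have hn3 : ‖(-s) • row O 2‖ = s := by
      rw [norm_smul, norm_row_eq_one hO, mul_one, Real.norm_eq_abs, abs_neg, abs_of_pos hs']
    refine Prod.ext (Subtype.ext ?_) (Subtype.ext ?_)
    · exact hn3
    · show bwdM (fwd q r s O) = O
      ext i j
      fin_cases i
      · show ‖Real.sqrt (s ^ 2 + q + r) • row O 0‖⁻¹ *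
            (Real.sqrt (s ^ 2 + q + r) • row O 0) j = O 0 j
        rw [hn1, smul3, row_apply]
        exact inv_mul_cancel_left₀ (ne_of_gt hc1p) _
      · show ‖Real.sqrt (s ^ 2 + r) • row O 1‖⁻¹ *
            (Real.sqrt (s ^ 2 + r) • row O 1) j = O 1 j
        rw [hn2, smul3, row_apply]
        exact inv_mul_cancel_left₀ (ne_of_gt hc2p) _
      · show -(‖(-s) • row O 2‖⁻¹ * ((-s) • row O 2) j) = O 2 j
        rw [hn3, smul3, row_apply]
        field_simp
  have hright : ∀ x, F (G x) = x := by
    rintro ⟨a, ha⟩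
    obtain ⟨h3, h2, h1⟩ := Nqr_facts hq hr ha
    obtain ⟨e1, e2, e3, e4, e5, e6⟩ := ha
    obtain ⟨r0, r1, r2⟩ := row_bwdM a
    apply Subtype.ext
    show fwd q r ‖a.2.2‖ (bwdM a) = a
    have k1 : ‖a.2.2‖ ^ 2 + q + r = ‖a.1‖ ^ 2 := by linarith
    have k2 : ‖a.2.2‖ ^ 2 + r = ‖a.2.1‖ ^ 2 := by linarith
    have c1 : Real.sqrt (‖a.2.2‖ ^ 2 + q + r) = ‖a.1‖ := by
      rw [k1, Real.sqrt_sq (norm_nonneg _)]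
    have c2 : Real.sqrt (‖a.2.2‖ ^ 2 + r) = ‖a.2.1‖ := by
      rw [k2, Real.sqrt_sq (norm_nonneg _)]
    show (Real.sqrt (‖a.2.2‖ ^ 2 + q + r) • row (bwdM a) 0,
        Real.sqrt (‖a.2.2‖ ^ 2 + r) • row (bwdM a) 1, (-‖a.2.2‖) • row (bwdM a) 2) = a
    rw [r0, r1, r2, c1, c2, smul_smul, smul_smul, smul_smul,
      mul_inv_cancel₀ (ne_of_gt h1), mul_inv_cancel₀ (ne_of_gt h2),
      show -‖a.2.2‖ * -‖a.2.2‖⁻¹ = ‖a.2.2‖ * ‖a.2.2‖⁻¹ by ring,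
      mul_inv_cancel₀ (ne_of_gt h3), one_smul, one_smul, one_smul]
  have hval : Continuous fun x : ↥(Nqr q r) => (x : E3 × E3 × E3) := continuous_subtype_val
  have hcoord : ∀ j : Fin 3, Continuous fun y : E3 => y j := by
    intro j
    exact (continuous_apply j).comp (PiLp.continuous_ofLp 2 (fun _ : Fin 3 => ℝ))
  have hcF : Continuous F := by
    apply Continuous.subtype_mk
    have hs : Continuous fun p : (Set.Ioi (0 : ℝ)) ×
        (Matrix.specialOrthogonalGroup (Fin 3) ℝ) => (p.1 : ℝ) :=
      continuous_subtype_val.comp continuous_fst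
    have hM : Continuous fun p : (Set.Ioi (0 : ℝ)) ×
        (Matrix.specialOrthogonalGroup (Fin 3) ℝ) => (p.2 : Matrix (Fin 3) (Fin 3) ℝ) :=
      continuous_subtype_val.comp continuous_snd
    have hrowc : ∀ i, Continuous fun p : (Set.Ioi (0 : ℝ)) ×
        (Matrix.specialOrthogonalGroup (Fin 3) ℝ) => row (↑p.2) i := fun i =>
      (PiLp.continuous_toLp 2 (fun _ : Fin 3 => ℝ)).comp ((continuous_apply i).comp hM)
    exact ((((hs.pow 2).add continuous_const).add continuous_const).sqrt.smul (hrowc 0)).prodMk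
      (((((hs.pow 2).add continuous_const).sqrt).smul (hrowc 1)).prodMk
        ((hs.neg).smul (hrowc 2)))
  have hcG : Continuous G := by
    apply Continuous.prodMk
    · apply Continuous.subtype_mk
      exact ((continuous_snd.comp continuous_snd).comp hval).norm
    · apply Continuous.subtype_mk
      apply continuous_matrix
      intro i j
      have ha1 : Continuous fun x : ↥(Nqr q r) => (↑x : E3 × E3 × E3).1 :=
        continuous_fst.comp hval
      have ha2 : Continuous fun x : ↥(Nqr q r) => (↑x : E3 × E3 × E3).2.1 :=
        (continuous_fst.comp continuous_snd).comp hval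
      have ha3 : Continuous fun x : ↥(Nqr q r) => (↑x : E3 × E3 × E3).2.2 :=
        (continuous_snd.comp continuous_snd).comp hval
      fin_cases i
      · show Continuous fun x : ↥(Nqr q r) =>
          ‖(↑x : E3 × E3 × E3).1‖⁻¹ * (↑x : E3 × E3 × E3).1 j
        exact (ha1.norm.inv₀ fun x => ne_of_gt (Nqr_facts hq hr x.2).2.2).mul
          ((hcoord j).comp ha1)
      · show Continuous fun x : ↥(Nqr q r) =>
          ‖(↑x : E3 × E3 × E3).2.1‖⁻¹ * (↑x : E3 × E3 × E3).2.1 j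
        exact (ha2.norm.inv₀ fun x => ne_of_gt (Nqr_facts hq hr x.2).2.1).mul
          ((hcoord j).comp ha2)
      · show Continuous fun x : ↥(Nqr q r) =>
          -(‖(↑x : E3 × E3 × E3).2.2‖⁻¹ * (↑x : E3 × E3 × E3).2.2 j)
        exact ((ha3.norm.inv₀ fun x => ne_of_gt (Nqr_facts hq hr x.2).1).mul
          ((hcoord j).comp ha3)).neg
  let H : (Set.Ioi (0 : ℝ)) × (Matrix.specialOrthogonalGroup (Fin 3) ℝ) ≃ₜ ↥(Nqr q r) :=
    ⟨⟨F, G, hleft, hright⟩, hcF, hcG⟩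
  refine ⟨⟨H, fun s O => rfl⟩, ?_⟩
  haveI : ConnectedSpace ↥(Set.Ioi (0:ℝ)) := Subtype.connectedSpace isConnected_Ioi
  haveI := connSO3
  rw [isConnected_iff_connectedSpace]
  exact H.surjective.connectedSpace H.continuous

end
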